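/- For n ≥ 1 and 0 ≤ j < 2^{n−1}, let I_{n,2j} := [2j·2^{−n}, (2j+1)·2^{−n}) and I_{n,2j+1} := [(2j+1)·2^{−n}, (2j+2)·2^{−n}) be the two halves of the dyadic interval [2j·2^{−(n−1)}, (2j+1)·2^{−(n−1)}) ⊆ [0,1). Then the set {(x,y) ∈ [0,1)×[0,1) : x ≠ y} is the pairwise disjoint union, over all n ≥ 1 and 0 ≤ j < 2^{n−1}, of the sets (I_{n,2j}×I_{n,2j+1}) ∪ (I_{n,2j+1}×I_{n,2j}). Consequently, for every Borel measure μ on ℝ², μ({(x,y) ∈ [0,1)² : x ≠ y}) = Σ_{n≥1} Σ_{0≤j<2^{n−1}} ( μ(I_{n,2j}×I_{n,2j+1}) + μ(I_{n,2j+1}×I_{n,2j}) ). -/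

import Mathlib

open MeasureTheory Set

noncomputable section

/-- The dyadic interval `I_{n,k} = [k·2^{-n}, (k+1)·2^{-n}) ⊆ [0,1)`. -/
def dyadicI (n k : ℕ) : Set ℝ :=
  Set.Ico ((k : ℝ) * (2 : ℝ) ^ (-(n : ℤ))) (((k : ℝ) + 1) * (2 : ℝ) ^ (-(n : ℤ)))

/-- The union `(I_{n,2j} × I_{n,2j+1}) ∪ (I_{n,2j+1} × I_{n,2j})` of the two products
of the sibling halves of a dyadic interval of generation `n-1`. -/
def dyadicPair (n j : ℕ) : Set (ℝ × ℝ) :=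
  (dyadicI n (2 * j)) ×ˢ (dyadicI n (2 * j + 1)) ∪
    (dyadicI n (2 * j + 1)) ×ˢ (dyadicI n (2 * j))
/-! Write `⌊x·2ⁿ⌋` for the index of the generation-`n` dyadic interval containing `x`; passing
from generation `n + 1` to `n` halves the index. Two distinct points of `[0,1)` have the same
index in generation `0` and different indices in fine enough generations, and since agreement
at generation `m` forces agreement at every `n ≤ m`, there is exactly one `n` at which the
indices agree while those of generation `n + 1` differ. This `n`, and the common index `j`,
determine the unique set `dyadicPair (n + 1) j` containing the point. -/

lemma Nat.exists_and_not_succ_of_not {P : ℕ → Prop} (h0 : P 0) {N : ℕ} (hN : ¬P N) :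
    ∃ n, P n ∧ ¬P (n + 1) := by
  induction N with
  | zero => exact absurd h0 hN
  | succ N ih =>
    by_cases hP : P N
    exacts [⟨N, hP, hN⟩, ih hP]

def dyadicIndex (n : ℕ) (x : ℝ) : ℤ := ⌊x * 2 ^ n⌋

lemma mem_dyadicI_iff {n k : ℕ} {x : ℝ} : x ∈ dyadicI n k ↔ dyadicIndex n x = k := by
  have h2 : (0 : ℝ) < 2 ^ n := by positivity
  rw [dyadicIndex, dyadicI, mem_Ico, Int.floor_eq_iff, zpow_neg, zpow_natCast,
    ← div_eq_mul_inv, ← div_eq_mul_inv, div_le_iff₀ h2, lt_div_iff₀ h2, Int.cast_natCast]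

lemma dyadicI_disjoint {n k l : ℕ} (h : k ≠ l) : Disjoint (dyadicI n k) (dyadicI n l) :=
  disjoint_left.2 fun x hk hl => h <| by
    rw [mem_dyadicI_iff] at hk hl
    omega

lemma dyadicIndex_succ_div_two (n : ℕ) (x : ℝ) :
    dyadicIndex (n + 1) x / 2 = dyadicIndex n x := by
  have h := Int.floor_div_natCast (x * 2 ^ n * 2) 2
  simp only [Nat.cast_ofNat] at h
  rw [mul_div_cancel_right₀ _ two_ne_zero] at h
  rw [dyadicIndex, dyadicIndex, pow_succ, ← mul_assoc, h]

lemma dyadicIndex_eq_of_le {x y : ℝ} {n m : ℕ} (hnm : n ≤ m)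
    (h : dyadicIndex m x = dyadicIndex m y) : dyadicIndex n x = dyadicIndex n y := by
  induction m, hnm using Nat.le_induction with
  | base => exact h
  | succ m _ ih =>
    exact ih (by rw [← dyadicIndex_succ_div_two m x, ← dyadicIndex_succ_div_two m y, h])

lemma mem_Ico_iff_dyadicIndex (n : ℕ) {x : ℝ} :
    x ∈ Ico (0 : ℝ) 1 ↔ 0 ≤ dyadicIndex n x ∧ dyadicIndex n x < 2 ^ n := by
  have h2 : (0 : ℝ) < 2 ^ n := by positivity
  rw [dyadicIndex, Int.floor_nonneg, Int.floor_lt, mem_Ico]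
  push_cast
  rw [mul_nonneg_iff_of_pos_right h2, mul_lt_iff_lt_one_left h2]

lemma exists_dyadicIndex_lt {x y : ℝ} (h : x < y) : ∃ n, dyadicIndex n x < dyadicIndex n y := by
  obtain ⟨n, hn⟩ := pow_unbounded_of_one_lt (y - x)⁻¹ one_lt_two
  rw [inv_lt_iff_one_lt_mul₀ (sub_pos.2 h)] at hn
  refine ⟨n, Int.lt_iff_add_one_le.2 ?_⟩
  rw [dyadicIndex, dyadicIndex, ← Int.floor_add_one]
  exact Int.floor_mono (by linarith)

lemma exists_dyadicIndex_split {x y : ℝ} (hx : x ∈ Ico (0 : ℝ) 1) (hy : y ∈ Ico (0 : ℝ) 1)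
    (hne : x ≠ y) :
    ∃ n, dyadicIndex n x = dyadicIndex n y ∧ dyadicIndex (n + 1) x ≠ dyadicIndex (n + 1) y := by
  have hx0 := (mem_Ico_iff_dyadicIndex 0).1 hx
  have hy0 := (mem_Ico_iff_dyadicIndex 0).1 hy
  rw [pow_zero] at hx0 hy0
  obtain ⟨N, hN⟩ : ∃ N, dyadicIndex N x ≠ dyadicIndex N y := by
    rcases hne.lt_or_gt with h | h
    · exact (exists_dyadicIndex_lt h).imp fun _ => ne_of_lt
    · exact (exists_dyadicIndex_lt h).imp fun _ => ne_of_gt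
  exact Nat.exists_and_not_succ_of_not (by omega) hN

lemma eq_of_dyadicIndex_split {x y : ℝ} {n m : ℕ}
    (hn : dyadicIndex n x = dyadicIndex n y) (hn' : dyadicIndex (n + 1) x ≠ dyadicIndex (n + 1) y)
    (hm : dyadicIndex m x = dyadicIndex m y) (hm' : dyadicIndex (m + 1) x ≠ dyadicIndex (m + 1) y) :
    n = m := by
  by_contra hne
  rcases Nat.lt_or_gt_of_ne hne with h | h
  · exact hn' (dyadicIndex_eq_of_le h hm)
  · exact hm' (dyadicIndex_eq_of_le h hn)

lemma mem_dyadicPair_succ_iff {n j : ℕ} {q : ℝ × ℝ} :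
    q ∈ dyadicPair (n + 1) j ↔ dyadicIndex n q.1 = j ∧ dyadicIndex n q.2 = j ∧
      dyadicIndex (n + 1) q.1 ≠ dyadicIndex (n + 1) q.2 := by
  have h1 := dyadicIndex_succ_div_two n q.1
  have h2 := dyadicIndex_succ_div_two n q.2
  simp only [dyadicPair, mem_union, mem_prod, mem_dyadicI_iff]
  push_cast
  constructor <;> intro <;> omega

lemma dyadicPair_succ_disjoint {n j m i : ℕ} (h : (n, j) ≠ (m, i)) :
    Disjoint (dyadicPair (n + 1) j) (dyadicPair (m + 1) i) := by
  refine disjoint_left.2 fun q hq hq' => h ?_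
  rw [mem_dyadicPair_succ_iff] at hq hq'
  obtain rfl : n = m := eq_of_dyadicIndex_split (hq.1.trans hq.2.1.symm) hq.2.2
    (hq'.1.trans hq'.2.1.symm) hq'.2.2
  exact Prod.ext rfl (by omega)

lemma mem_Ico_offDiag_iff {q : ℝ × ℝ} :
    q ∈ (Ico (0 : ℝ) 1).offDiag ↔ ∃ n, ∃ j < 2 ^ n, q ∈ dyadicPair (n + 1) j := by
  simp only [mem_offDiag, mem_dyadicPair_succ_iff]
  constructor
  · rintro ⟨hx, hy, hne⟩
    obtain ⟨n, heq, hne'⟩ := exists_dyadicIndex_split hx hy hne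
    have := (mem_Ico_iff_dyadicIndex n).1 hx
    refine ⟨n, (dyadicIndex n q.1).toNat, ?_, by omega, by omega, hne'⟩
    zify
    omega
  · rintro ⟨n, j, hj, hx, hy, hne⟩
    have hj' : (j : ℤ) < 2 ^ n := by exact_mod_cast hj
    exact ⟨(mem_Ico_iff_dyadicIndex n).2 (by omega), (mem_Ico_iff_dyadicIndex n).2 (by omega),
      fun h => hne (by rw [h])⟩

lemma Ico_offDiag_eq_iUnion :
    (Ico (0 : ℝ) 1).offDiag = ⋃ n, ⋃ j ∈ Finset.range (2 ^ n), dyadicPair (n + 1) j := by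
  ext q
  simp only [mem_iUnion, Finset.mem_range, exists_prop]
  exact mem_Ico_offDiag_iff

lemma measurableSet_dyadicPair (n j : ℕ) : MeasurableSet (dyadicPair n j) :=
  (measurableSet_Ico.prod measurableSet_Ico).union (measurableSet_Ico.prod measurableSet_Ico)

lemma measure_dyadicPair (μ : Measure (ℝ × ℝ)) (n j : ℕ) :
    μ (dyadicPair n j) = μ (dyadicI n (2 * j) ×ˢ dyadicI n (2 * j + 1))
      + μ (dyadicI n (2 * j + 1) ×ˢ dyadicI n (2 * j)) :=
  measure_union (disjoint_prod.2 (.inl (dyadicI_disjoint (by omega))))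
    (measurableSet_Ico.prod measurableSet_Ico)

lemma measure_Ico_offDiag (μ : Measure (ℝ × ℝ)) :
    μ (Ico (0 : ℝ) 1).offDiag = ∑' n, ∑ j ∈ Finset.range (2 ^ n), μ (dyadicPair (n + 1) j) := by
  rw [Ico_offDiag_eq_iUnion, measure_iUnion _ fun n =>
    Finset.measurableSet_biUnion _ fun j _ => measurableSet_dyadicPair _ _]
  · exact tsum_congr fun n => measure_biUnion_finset
      (fun j _ i _ hji => dyadicPair_succ_disjoint (by simpa using hji))
      fun j _ => measurableSet_dyadicPair _ _
  · intro n m hnm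
    simp only [Function.onFun, disjoint_iUnion_left, disjoint_iUnion_right]
    exact fun j _ i _ => dyadicPair_succ_disjoint (by simp [hnm])

/-- The dyadic decomposition of the off-diagonal part of `[0,1)²`: it is the pairwise
disjoint union, over `n ≥ 1` and `0 ≤ j < 2^{n-1}`, of the sets
`(I_{n,2j} × I_{n,2j+1}) ∪ (I_{n,2j+1} × I_{n,2j})`; consequently, every Borel measure
`μ` on `ℝ²` satisfies
`μ({(x,y) ∈ [0,1)² : x ≠ y}) = Σ_{n≥1} Σ_{j<2^{n-1}} (μ(I_{n,2j}×I_{n,2j+1}) + μ(I_{n,2j+1}×I_{n,2j}))`. -/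
theorem dyadic_offdiagonal_decomposition :
    (Set.PairwiseDisjoint {p : ℕ × ℕ | 1 ≤ p.1 ∧ p.2 < 2 ^ (p.1 - 1)}
      (fun p => dyadicPair p.1 p.2)) ∧
    (⋃ p ∈ {p : ℕ × ℕ | 1 ≤ p.1 ∧ p.2 < 2 ^ (p.1 - 1)}, dyadicPair p.1 p.2
      = {q : ℝ × ℝ | q.1 ∈ Set.Ico (0 : ℝ) 1 ∧ q.2 ∈ Set.Ico (0 : ℝ) 1 ∧ q.1 ≠ q.2}) ∧
    (∀ μ : Measure (ℝ × ℝ),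
      μ {q : ℝ × ℝ | q.1 ∈ Set.Ico (0 : ℝ) 1 ∧ q.2 ∈ Set.Ico (0 : ℝ) 1 ∧ q.1 ≠ q.2}
        = ∑' n : ℕ, ∑ j ∈ Finset.range (2 ^ n),
            (μ ((dyadicI (n + 1) (2 * j)) ×ˢ (dyadicI (n + 1) (2 * j + 1)))
              + μ ((dyadicI (n + 1) (2 * j + 1)) ×ˢ (dyadicI (n + 1) (2 * j))))) := by
  refine ⟨?_, ?_, fun μ =>
    (measure_Ico_offDiag μ).trans (by simp only [measure_dyadicPair])⟩
  · rintro ⟨_ | n, j⟩ ⟨hn, -⟩ ⟨_ | m, i⟩ ⟨hm, -⟩ hne <;> try omega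
    exact dyadicPair_succ_disjoint (by simpa using hne)
  · ext q
    change _ ↔ q ∈ (Ico (0 : ℝ) 1).offDiag
    simp only [mem_iUnion, mem_ofPred_eq, Prod.exists, exists_prop, mem_Ico_offDiag_iff]
    constructor
    · rintro ⟨_ | n, j, ⟨hn, hj⟩, hq⟩
      · omega
      · exact ⟨n, j, by simpa using hj, hq⟩
    · rintro ⟨n, j, hj, hq⟩
      exact ⟨n + 1, j, ⟨by omega, by simpa using hj⟩, hq⟩
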